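/- Let H be a bialgebra over a field k, let g₁, g₂ ∈ H be group-like elements (Δ(gᵢ) = gᵢ⊗gᵢ, ε(gᵢ) = 1) with g₁g₂ = 1, and let x₁, x₂ ∈ H satisfy Δ(xᵢ) = 1⊗xᵢ + xᵢ⊗gᵢ for i = 1,2 (i.e. xᵢ is gᵢ-primitive). Then the element F = x₁ ⊗ g₁x₂ ∈ H⊗H is a co-Hochschild 2-cocycle: 1⊗F + (I⊗Δ)(F) = F⊗1 + (Δ⊗I)(F). -/

import Mathlib

open scoped TensorProduct

noncomputable section

variable (K H : Type*) [Field K] [Ring H] [Bialgebra K H]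

/-- The comultiplication of the bialgebra `H`. -/
def cm : H →ₗ[K] H ⊗[K] H := Coalgebra.comul

/-- The counit of the bialgebra `H`. -/
def cu : H →ₗ[K] K := Coalgebra.counit

/-- A twisted derivation of the bialgebra `H` is a pair `(d, φ)` where `d` is a
`K`-algebra derivation of `H` and `φ ∈ H ⊗ H`, such that
`(d⊗I + I⊗d)(Δ(x)) − Δ(d(x)) = [φ, Δ(x)]` for all `x`,
`1⊗φ + (I⊗Δ)(φ) = φ⊗1 + (Δ⊗I)(φ)` (co-Hochschild 2-cocycle condition), and
`ε∘d = 0`, `(ε⊗I)(φ) = 0 = (I⊗ε)(φ)`. -/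
structure IsTwistedDerivation (d : H →ₗ[K] H) (φ : H ⊗[K] H) : Prop where
  leibniz : ∀ x y : H, d (x * y) = d x * y + x * d y
  conj : ∀ x : H,
    (LinearMap.rTensor H d + LinearMap.lTensor H d) (cm K H x) - cm K H (d x)
      = φ * cm K H x - cm K H x * φ
  cocycle : (1 : H) ⊗ₜ[K] φ + LinearMap.lTensor H (cm K H) φ
      = TensorProduct.assoc K H H H (φ ⊗ₜ[K] (1 : H) + LinearMap.rTensor H (cm K H) φ)
  counit_comp : ∀ x : H, cu K H (d x) = 0
  counit_left : TensorProduct.lid K H (LinearMap.rTensor H (cu K H) φ) = 0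
  counit_right : TensorProduct.rid K H (LinearMap.lTensor H (cu K H) φ) = 0

/-- The inner derivation `[a, −] : x ↦ ax − xa`. -/
def innerDer (a : H) : H →ₗ[K] H := LinearMap.mulLeft K a - LinearMap.mulRight K a

/-- The coboundary twist `a⊗1 + 1⊗a − Δ(a)`. -/
def bdryTwist (a : H) : H ⊗[K] H := a ⊗ₜ[K] (1 : H) + (1 : H) ⊗ₜ[K] a - cm K H a

def IsCoHochschildTwoCocycle (R A : Type*) [CommSemiring R] [AddCommMonoid A] [One A]
    [Module R A] [Coalgebra R A] (φ : A ⊗[R] A) : Prop :=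
  (1 : A) ⊗ₜ[R] φ + LinearMap.lTensor A Coalgebra.comul φ
    = TensorProduct.assoc R A A A (φ ⊗ₜ[R] (1 : A) + LinearMap.rTensor A Coalgebra.comul φ)

open Coalgebra in
theorem isCoHochschildTwoCocycle_tmul {R A : Type*} [CommSemiring R] [AddCommMonoid A] [One A]
    [Module R A] [Coalgebra R A] {a b g : A}
    (ha : comul (R := R) a = 1 ⊗ₜ a + a ⊗ₜ g) (hb : comul (R := R) b = g ⊗ₜ b + b ⊗ₜ 1) :
    IsCoHochschildTwoCocycle R A (a ⊗ₜ b) := by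
  -- both sides expand to `1⊗a⊗b + a⊗g⊗b + a⊗b⊗1`
  simp only [IsCoHochschildTwoCocycle, LinearMap.lTensor_tmul, LinearMap.rTensor_tmul, ha, hb,
    TensorProduct.tmul_add, TensorProduct.add_tmul, map_add, TensorProduct.assoc_tmul]
  abel

open Coalgebra in
theorem comul_mul_of_comul_eq_tmul_self {R A : Type*} [CommSemiring R] [Semiring A]
    [Bialgebra R A] {g x h : A} (hg : comul (R := R) g = g ⊗ₜ g)
    (hx : comul (R := R) x = 1 ⊗ₜ x + x ⊗ₜ h) :
    comul (R := R) (g * x) = g ⊗ₜ (g * x) + (g * x) ⊗ₜ (g * h) := by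
  rw [Bialgebra.comul_mul, hg, hx, mul_add, Algebra.TensorProduct.tmul_mul_tmul,
    Algebra.TensorProduct.tmul_mul_tmul, mul_one]

theorem relative_primitive_cocycle (g1 g2 x1 x2 : H)
    (hg1 : cm K H g1 = g1 ⊗ₜ[K] g1)
    (hg : g1 * g2 = 1)
    (hx1 : cm K H x1 = (1 : H) ⊗ₜ[K] x1 + x1 ⊗ₜ[K] g1)
    (hx2 : cm K H x2 = (1 : H) ⊗ₜ[K] x2 + x2 ⊗ₜ[K] g2) :
    (1 : H) ⊗ₜ[K] (x1 ⊗ₜ[K] (g1 * x2))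
        + LinearMap.lTensor H (cm K H) (x1 ⊗ₜ[K] (g1 * x2))
      = TensorProduct.assoc K H H H ((x1 ⊗ₜ[K] (g1 * x2)) ⊗ₜ[K] (1 : H)
        + LinearMap.rTensor H (cm K H) (x1 ⊗ₜ[K] (g1 * x2))) := by
  have hg1x2 : cm K H (g1 * x2) = g1 ⊗ₜ[K] (g1 * x2) + (g1 * x2) ⊗ₜ[K] (1 : H) := by
    rw [← hg]
    exact comul_mul_of_comul_eq_tmul_self hg1 hx2
  exact isCoHochschildTwoCocycle_tmul hx1 hg1x2

end
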